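/- arXiv:2409.00132 — 3 statements merged into one kernel-verified Lean document; each statement's English description precedes it below -/
import Mathlib

section
/- Let b₁, b₂, b₃ be nonzero real constants and define φ : ℝ² → ℝ⁶ by φ(u,v) = (−b₁u, √(b₁²+1)/√(b₁²+2) · cos(√(b₁²+2) u), √(b₁²+1)/√(b₁²+2) · sin(√(b₁²+2) u), b₂, b₃ sin(v/b₃), b₃ cos(v/b₃)). Then with respect to the Lorentzian inner product ⟨x,y⟩ = −x₁y₁ + Σ_{i=2}^{6} xᵢyᵢ on ℝ⁶, the partial derivatives satisfy ⟨∂φ/∂u, ∂φ/∂u⟩ = 1, ⟨∂φ/∂v, ∂φ/∂v⟩ = 1 and ⟨∂φ/∂u, ∂φ/∂v⟩ = 0 at all points; in particular φ is a space-like isometric immersion. -/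
open Real

/-- The Lorentzian (Minkowski) inner product `⟨x,y⟩ = -x₁y₁ + ∑_{i=2}^{6} xᵢyᵢ` on `ℝ⁶`. -/
noncomputable def lorentz6 (x y : Fin 6 → ℝ) : ℝ :=
  -(x 0 * y 0) + x 1 * y 1 + x 2 * y 2 + x 3 * y 3 + x 4 * y 4 + x 5 * y 5

/-- The surface of Theorem 6.1 in `𝔼¹₁ × S⁴ ⊂ ℝ⁶`. -/
noncomputable def phiRS (b₁ b₂ b₃ : ℝ) (u v : ℝ) : Fin 6 → ℝ :=
  ![-b₁ * u,
    (Real.sqrt (b₁ ^ 2 + 1) / Real.sqrt (b₁ ^ 2 + 2)) * Real.cos (Real.sqrt (b₁ ^ 2 + 2) * u),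
    (Real.sqrt (b₁ ^ 2 + 1) / Real.sqrt (b₁ ^ 2 + 2)) * Real.sin (Real.sqrt (b₁ ^ 2 + 2) * u),
    b₂,
    b₃ * Real.sin (v / b₃),
    b₃ * Real.cos (v / b₃)]

/-! The `u`-curves of `φ` are helices: their circular part has speed `√(b₁²+1)` and their
time-like part speed `b₁`, so their Lorentzian speed is `(b₁²+1) - b₁² = 1`. The `v`-curves are
unit-speed circles of radius `b₃`, and they move in coordinates where `φ_u` vanishes, hence
`⟨φ_u, φ_v⟩ = 0`. -/

theorem hasDerivAt_mul_cos_mul (r ω t : ℝ) :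
    HasDerivAt (fun s => r * cos (ω * s)) (-(r * ω * sin (ω * t))) t := by
  have := (((hasDerivAt_id t).const_mul ω).cos).const_mul r
  simpa [mul_comm, mul_left_comm, mul_assoc] using this

theorem hasDerivAt_mul_sin_mul (r ω t : ℝ) :
    HasDerivAt (fun s => r * sin (ω * s)) (r * ω * cos (ω * t)) t := by
  have := (((hasDerivAt_id t).const_mul ω).sin).const_mul r
  simpa [mul_comm, mul_left_comm, mul_assoc] using this

theorem hasDerivAt_mul_sin_div {c : ℝ} (hc : c ≠ 0) (t : ℝ) :
    HasDerivAt (fun s => c * sin (s / c)) (cos (t / c)) t := by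
  simpa only [inv_mul_eq_div, mul_inv_cancel₀ hc, one_mul] using hasDerivAt_mul_sin_mul c c⁻¹ t

theorem hasDerivAt_mul_cos_div {c : ℝ} (hc : c ≠ 0) (t : ℝ) :
    HasDerivAt (fun s => c * cos (s / c)) (-sin (t / c)) t := by
  simpa only [inv_mul_eq_div, mul_inv_cancel₀ hc, one_mul] using hasDerivAt_mul_cos_mul c c⁻¹ t

noncomputable def phiRS_du (b₁ u : ℝ) : Fin 6 → ℝ :=
  ![-b₁,
    -(√(b₁ ^ 2 + 1) * sin (√(b₁ ^ 2 + 2) * u)),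
    √(b₁ ^ 2 + 1) * cos (√(b₁ ^ 2 + 2) * u),
    0, 0, 0]

noncomputable def phiRS_dv (b₃ v : ℝ) : Fin 6 → ℝ :=
  ![0, 0, 0, 0, cos (v / b₃), -sin (v / b₃)]

theorem sqrt_sq_add_one_div_mul_sqrt_sq_add_two (b : ℝ) :
    √(b ^ 2 + 1) / √(b ^ 2 + 2) * √(b ^ 2 + 2) = √(b ^ 2 + 1) :=
  div_mul_cancel₀ _ (by positivity)

theorem deriv_phiRS_u (b₁ b₂ b₃ u v : ℝ) :
    (fun i => deriv (fun u' => phiRS b₁ b₂ b₃ u' v i) u) = phiRS_du b₁ u := by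
  funext i
  fin_cases i
  · simp [phiRS, phiRS_du]
  · rw [phiRS_du, ← sqrt_sq_add_one_div_mul_sqrt_sq_add_two]
    exact (hasDerivAt_mul_cos_mul _ _ u).deriv
  · rw [phiRS_du, ← sqrt_sq_add_one_div_mul_sqrt_sq_add_two]
    exact (hasDerivAt_mul_sin_mul _ _ u).deriv
  all_goals simp [phiRS, phiRS_du]

theorem deriv_phiRS_v (b₁ b₂ : ℝ) {b₃ : ℝ} (hb₃ : b₃ ≠ 0) (u v : ℝ) :
    (fun i => deriv (fun v' => phiRS b₁ b₂ b₃ u v' i) v) = phiRS_dv b₃ v := by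
  funext i
  fin_cases i
  any_goals simp [phiRS, phiRS_dv]; done
  · exact (hasDerivAt_mul_sin_div hb₃ v).deriv
  · exact (hasDerivAt_mul_cos_div hb₃ v).deriv

theorem lorentz6_phiRS_du_self (b₁ u : ℝ) : lorentz6 (phiRS_du b₁ u) (phiRS_du b₁ u) = 1 := by
  have hsq : √(b₁ ^ 2 + 1) ^ 2 = b₁ ^ 2 + 1 := sq_sqrt (by positivity)
  simp only [lorentz6, phiRS_du, Matrix.cons_val_zero, Matrix.cons_val_one, Matrix.cons_val]
  linear_combination (sin (√(b₁ ^ 2 + 2) * u) ^ 2 + cos (√(b₁ ^ 2 + 2) * u) ^ 2) * hsq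
    + (b₁ ^ 2 + 1) * sin_sq_add_cos_sq (√(b₁ ^ 2 + 2) * u)

theorem lorentz6_phiRS_dv_self (b₃ v : ℝ) : lorentz6 (phiRS_dv b₃ v) (phiRS_dv b₃ v) = 1 := by
  simp only [lorentz6, phiRS_dv, Matrix.cons_val_zero, Matrix.cons_val_one, Matrix.cons_val]
  linear_combination cos_sq_add_sin_sq (v / b₃)

theorem lorentz6_phiRS_du_dv (b₁ b₃ u v : ℝ) : lorentz6 (phiRS_du b₁ u) (phiRS_dv b₃ v) = 0 := by
  simp [lorentz6, phiRS_du, phiRS_dv]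

theorem phiRS_spacelike_isometric_immersion_general (b₁ b₂ b₃ : ℝ)
    (hb₃ : b₃ ≠ 0) :
    ∀ u v : ℝ,
      lorentz6 (fun i => deriv (fun u' => phiRS b₁ b₂ b₃ u' v i) u)
        (fun i => deriv (fun u' => phiRS b₁ b₂ b₃ u' v i) u) = 1 ∧
      lorentz6 (fun i => deriv (fun v' => phiRS b₁ b₂ b₃ u v' i) v)
        (fun i => deriv (fun v' => phiRS b₁ b₂ b₃ u v' i) v) = 1 ∧
      lorentz6 (fun i => deriv (fun u' => phiRS b₁ b₂ b₃ u' v i) u)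
        (fun i => deriv (fun v' => phiRS b₁ b₂ b₃ u v' i) v) = 0 := by
  intro u v
  rw [deriv_phiRS_u, deriv_phiRS_v b₁ b₂ hb₃]
  exact ⟨lorentz6_phiRS_du_self b₁ u, lorentz6_phiRS_dv_self b₃ v, lorentz6_phiRS_du_dv b₁ b₃ u v⟩

/-- The partial derivatives of `φ` form a Lorentz-orthonormal space-like frame:
`⟨φ_u,φ_u⟩ = 1`, `⟨φ_v,φ_v⟩ = 1`, `⟨φ_u,φ_v⟩ = 0`; in particular `φ` is a
space-like isometric immersion. -/
theorem phiRS_spacelike_isometric_immersion (b₁ b₂ b₃ : ℝ)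
    (hb₁ : b₁ ≠ 0) (hb₂ : b₂ ≠ 0) (hb₃ : b₃ ≠ 0) :
    ∀ u v : ℝ,
      lorentz6 (fun i => deriv (fun u' => phiRS b₁ b₂ b₃ u' v i) u)
        (fun i => deriv (fun u' => phiRS b₁ b₂ b₃ u' v i) u) = 1 ∧
      lorentz6 (fun i => deriv (fun v' => phiRS b₁ b₂ b₃ u v' i) v)
        (fun i => deriv (fun v' => phiRS b₁ b₂ b₃ u v' i) v) = 1 ∧
      lorentz6 (fun i => deriv (fun u' => phiRS b₁ b₂ b₃ u' v i) u)
        (fun i => deriv (fun v' => phiRS b₁ b₂ b₃ u v' i) v) = 0 :=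
  phiRS_spacelike_isometric_immersion_general b₁ b₂ b₃ hb₃
end

section
/- Let b₁, b₂, b₃ be nonzero real constants and define φ : ℝ² → ℝ⁶ by φ(u,v) = (−b₁u, √(b₁²+1)/√(b₁²+2) · cos(√(b₁²+2) u), √(b₁²+1)/√(b₁²+2) · sin(√(b₁²+2) u), b₂, b₃ sin(v/b₃), b₃ cos(v/b₃)). Then: (i) the mixed partial derivative ∂²φ/∂u∂v vanishes identically; (ii) the vector Δφ := ∂²φ/∂u² + ∂²φ/∂v² satisfies ⟨Δφ, ∂φ/∂u⟩ = 0 and ⟨Δφ, ∂φ/∂v⟩ = 0 at every point, where ⟨x,y⟩ = −x₁y₁ + Σ_{i=2}^{6} xᵢyᵢ; and (iii) the first component of Δφ is identically zero, i.e. ⟨Δφ, ∂/∂t⟩ = 0 where ∂/∂t = (1,0,0,0,0,0). -/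
/-!
Every coordinate of `φ` depends on only one of `u`, `v`: the `u`-curves are the helices
`t ↦ (-b₁ t, r cos ωt, r sin ωt)` and the `v`-curves are circles of radius `b₃` in the last two
coordinates, both traversed at constant speed. Hence `φ_uv = 0`, the acceleration of each curve is
orthogonal to its own velocity and supported in coordinates where the other curve's velocity
vanishes, and the time coordinate, being linear in `u`, has zero second derivative.
-/

open Real

/-- The Laplacian `Δφ = φ_uu + φ_vv` of the surface `φ`. -/
noncomputable def lapPhiRS (b₁ b₂ b₃ : ℝ) (u v : ℝ) : Fin 6 → ℝ := fun i =>
  deriv (fun u' => deriv (fun u'' => phiRS b₁ b₂ b₃ u'' v i) u') u +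
    deriv (fun v' => deriv (fun v'' => phiRS b₁ b₂ b₃ u v'' i) v') v

theorem deriv_cos_mul (s x : ℝ) : deriv (fun x => cos (s * x)) x = -(s * sin (s * x)) := by
  simpa [mul_comm] using ((hasDerivAt_id x).const_mul s).cos.deriv

theorem deriv_sin_mul (s x : ℝ) : deriv (fun x => sin (s * x)) x = s * cos (s * x) := by
  simpa [mul_comm] using ((hasDerivAt_id x).const_mul s).sin.deriv

noncomputable def helixRadius (b₁ : ℝ) : ℝ := √(b₁ ^ 2 + 1) / √(b₁ ^ 2 + 2)

noncomputable def helixFreq (b₁ : ℝ) : ℝ := √(b₁ ^ 2 + 2)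

section
variable (b₁ b₂ b₃ u v : ℝ)

local notation "r" => helixRadius b₁
local notation "ω" => helixFreq b₁

theorem phiRS_partial_u :
    (fun i => deriv (fun u' => phiRS b₁ b₂ b₃ u' v i) u) =
      ![-b₁, -(r * ω) * sin (ω * u), r * ω * cos (ω * u), 0, 0, 0] := by
  funext i
  fin_cases i <;> simp [phiRS, helixRadius, helixFreq, deriv_cos_mul, deriv_sin_mul] <;> ring

theorem phiRS_partial_v :
    (fun i => deriv (fun v' => phiRS b₁ b₂ b₃ u v' i) v) =
      ![0, 0, 0, 0, b₃ / b₃ * cos (v / b₃), -(b₃ / b₃) * sin (v / b₃)] := by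
  funext i
  fin_cases i <;> simp [phiRS] <;> ring

theorem phiRS_mixed_partial (i : Fin 6) :
    deriv (fun u' => deriv (fun v' => phiRS b₁ b₂ b₃ u' v' i) v) u = 0 := by
  simp only [fun u' => congrFun (phiRS_partial_v b₁ b₂ b₃ u' v) i, deriv_const]

theorem lapPhiRS_eq :
    lapPhiRS b₁ b₂ b₃ u v =
      ![0, -(r * ω ^ 2) * cos (ω * u), -(r * ω ^ 2) * sin (ω * u), 0,
        -(b₃ / b₃ ^ 2) * sin (v / b₃), -(b₃ / b₃ ^ 2) * cos (v / b₃)] := by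
  funext i
  simp only [lapPhiRS, fun u' => congrFun (phiRS_partial_u b₁ b₂ b₃ u' v) i,
    fun v' => congrFun (phiRS_partial_v b₁ b₂ b₃ u v') i]
  fin_cases i <;> simp [deriv_cos_mul, deriv_sin_mul] <;> ring

end

theorem phiRS_biconservative_general (b₁ b₂ b₃ : ℝ) :
    ∀ u v : ℝ,
      (∀ i : Fin 6, deriv (fun u' => deriv (fun v' => phiRS b₁ b₂ b₃ u' v' i) v) u = 0) ∧
      lorentz6 (lapPhiRS b₁ b₂ b₃ u v)
        (fun i => deriv (fun u' => phiRS b₁ b₂ b₃ u' v i) u) = 0 ∧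
      lorentz6 (lapPhiRS b₁ b₂ b₃ u v)
        (fun i => deriv (fun v' => phiRS b₁ b₂ b₃ u v' i) v) = 0 ∧
      lapPhiRS b₁ b₂ b₃ u v 0 = 0 := by
  intro u v
  refine ⟨phiRS_mixed_partial b₁ b₂ b₃ u v, ?_, ?_, by rw [lapPhiRS_eq]; rfl⟩
  · rw [lapPhiRS_eq, phiRS_partial_u]
    simp only [lorentz6, Matrix.cons_val_zero, Matrix.cons_val_one, Matrix.cons_val]
    ring
  · rw [lapPhiRS_eq, phiRS_partial_v]
    simp only [lorentz6, Matrix.cons_val_zero, Matrix.cons_val_one, Matrix.cons_val]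
    ring

/-- (i) the mixed partial `φ_uv` vanishes; (ii) `Δφ` is normal to the surface;
(iii) the first component of `Δφ` vanishes, i.e. `⟨Δφ, ∂/∂t⟩ = 0`
(the biconservativity condition `⟨H,η⟩ = 0`). -/
theorem phiRS_biconservative (b₁ b₂ b₃ : ℝ)
    (hb₁ : b₁ ≠ 0) (hb₂ : b₂ ≠ 0) (hb₃ : b₃ ≠ 0) :
    ∀ u v : ℝ,
      (∀ i : Fin 6, deriv (fun u' => deriv (fun v' => phiRS b₁ b₂ b₃ u' v' i) v) u = 0) ∧
      lorentz6 (lapPhiRS b₁ b₂ b₃ u v)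
        (fun i => deriv (fun u' => phiRS b₁ b₂ b₃ u' v i) u) = 0 ∧
      lorentz6 (lapPhiRS b₁ b₂ b₃ u v)
        (fun i => deriv (fun v' => phiRS b₁ b₂ b₃ u v' i) v) = 0 ∧
      lapPhiRS b₁ b₂ b₃ u v 0 = 0 :=
  phiRS_biconservative_general b₁ b₂ b₃
end

section
/- Let m > 1, let b₀, b₃ > 0 and b₂ ∈ ℝ with b₀² + b₂² + b₃² = 1, and define ψ : ℝ² → ℝ⁶ by ψ(u,v) = (−√(m²−1) u, b₀ cos(m u / b₀), b₀ sin(m u / b₀), b₂, b₃ sin(v/b₃), b₃ cos(v/b₃)). Let ν(u,v) := (0, ψ₂, ψ₃, ψ₄, ψ₅, ψ₆)(u,v) and W := ∂²ψ/∂u² + ∂²ψ/∂v² + (m²+1) ν. Then at every point: ⟨W, ∂ψ/∂u⟩ = 0 and ⟨W, ∂ψ/∂v⟩ = 0 with respect to the Lorentzian inner product ⟨x,y⟩ = −x₁y₁ + Σ_{i=2}^{6} xᵢyᵢ, and ∂W/∂v = ((m²+1) − 1/b₃²) · ∂ψ/∂v. -/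
/-! The surface is the product of the helix `u ↦ (-√(m²-1) u, b₀ cos (m u / b₀), b₀ sin (m u / b₀))`
and the circle `v ↦ (b₃ sin (v / b₃), b₃ cos (v / b₃))`. A circular component `f` of angular speed
`k` satisfies `f'' = -k² f`, so `W` is componentwise a constant multiple of `ν`, the multiple on the
circle factor being `m² + 1 - 1/b₃²`. Hence `⟨W, ψ_u⟩` and `⟨W, ψ_v⟩` reduce to the product of a
circle's position with its velocity, which vanishes, and `∂W/∂v = (m² + 1 - 1/b₃²) ψ_v`. -/

open Real

/-- The candidate surface `ψ` in `𝔼¹₁ × S⁴ ⊂ ℝ⁶` from the proof of Theorem 6.1. -/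
noncomputable def psiRS (m b₀ b₂ b₃ : ℝ) (u v : ℝ) : Fin 6 → ℝ :=
  ![-(Real.sqrt (m ^ 2 - 1)) * u,
    b₀ * Real.cos (m * u / b₀),
    b₀ * Real.sin (m * u / b₀),
    b₂,
    b₃ * Real.sin (v / b₃),
    b₃ * Real.cos (v / b₃)]

/-- The position vector `ν = (0, ψ₂, …, ψ₆)` in the `S⁴` factor. -/
noncomputable def nuRS (m b₀ b₂ b₃ : ℝ) (u v : ℝ) : Fin 6 → ℝ := fun i =>
  if i = 0 then 0 else psiRS m b₀ b₂ b₃ u v i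

/-- `W = ψ_uu + ψ_vv + (m²+1) ν`, twice the mean curvature vector of `ψ` in `𝔼¹₁ × S⁴`. -/
noncomputable def WRS (m b₀ b₂ b₃ : ℝ) (u v : ℝ) : Fin 6 → ℝ := fun i =>
  deriv (fun u' => deriv (fun u'' => psiRS m b₀ b₂ b₃ u'' v i) u') u +
    deriv (fun v' => deriv (fun v'' => psiRS m b₀ b₂ b₃ u v'' i) v') v +
    (m ^ 2 + 1) * nuRS m b₀ b₂ b₃ u v i

section Circle
variable (r k : ℝ)

theorem deriv_mul_cos_mul :
    deriv (fun t => r * cos (k * t)) = fun t => -(r * k) * sin (k * t) := by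
  funext t
  convert (((hasDerivAt_id' t).const_mul k).cos.const_mul r).deriv using 1
  ring

theorem deriv_mul_sin_mul : deriv (fun t => r * sin (k * t)) = fun t => r * k * cos (k * t) := by
  funext t
  convert (((hasDerivAt_id' t).const_mul k).sin.const_mul r).deriv using 1
  ring

end Circle

section Surface
variable (m b₀ b₂ b₃ u v : ℝ)

theorem psiRS_eq : psiRS m b₀ b₂ b₃ u v =
    ![-√(m ^ 2 - 1) * u, b₀ * cos (m / b₀ * u), b₀ * sin (m / b₀ * u), b₂,
      b₃ * sin (b₃⁻¹ * v), b₃ * cos (b₃⁻¹ * v)] := by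
  simp only [psiRS, div_mul_eq_mul_div, inv_mul_eq_div]

theorem deriv_psiRS_u (i : Fin 6) : deriv (fun u' => psiRS m b₀ b₂ b₃ u' v i) u =
    ![-√(m ^ 2 - 1), -(b₀ * (m / b₀)) * sin (m / b₀ * u), b₀ * (m / b₀) * cos (m / b₀ * u),
      0, 0, 0] i := by
  fin_cases i <;>
    simp only [psiRS_eq, Fin.reduceFinMk, Fin.zero_eta, Fin.mk_one, Matrix.cons_val,
      Matrix.cons_val_zero, Matrix.cons_val_one, deriv_const_mul_id', deriv_const',
      deriv_mul_cos_mul, deriv_mul_sin_mul]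

theorem deriv_psiRS_v (i : Fin 6) : deriv (fun v' => psiRS m b₀ b₂ b₃ u v' i) v =
    ![0, 0, 0, 0, b₃ * b₃⁻¹ * cos (b₃⁻¹ * v), -(b₃ * b₃⁻¹) * sin (b₃⁻¹ * v)] i := by
  fin_cases i <;>
    simp only [psiRS_eq, Fin.reduceFinMk, Fin.zero_eta, Fin.mk_one, Matrix.cons_val,
      Matrix.cons_val_zero, Matrix.cons_val_one, deriv_const', deriv_mul_cos_mul, deriv_mul_sin_mul]

theorem WRS_eq : WRS m b₀ b₂ b₃ u v =
    ![0, ((m ^ 2 + 1) - (m / b₀) ^ 2) * psiRS m b₀ b₂ b₃ u v 1,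
      ((m ^ 2 + 1) - (m / b₀) ^ 2) * psiRS m b₀ b₂ b₃ u v 2, (m ^ 2 + 1) * psiRS m b₀ b₂ b₃ u v 3,
      ((m ^ 2 + 1) - 1 / b₃ ^ 2) * psiRS m b₀ b₂ b₃ u v 4,
      ((m ^ 2 + 1) - 1 / b₃ ^ 2) * psiRS m b₀ b₂ b₃ u v 5] := by
  funext i
  simp only [WRS, nuRS, deriv_psiRS_u, deriv_psiRS_v]
  fin_cases i <;>
    simp only [Fin.reduceFinMk, Fin.zero_eta, Fin.mk_one, Matrix.cons_val, Matrix.cons_val_zero,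
      Matrix.cons_val_one, deriv_const', deriv_mul_cos_mul, deriv_mul_sin_mul, Fin.reduceEq,
      ↓reduceIte, psiRS_eq] <;> ring

end Surface

theorem WRS_normal_and_v_derivative_general (m b₀ b₂ b₃ : ℝ) :
    ∀ u v : ℝ,
      lorentz6 (WRS m b₀ b₂ b₃ u v)
        (fun i => deriv (fun u' => psiRS m b₀ b₂ b₃ u' v i) u) = 0 ∧
      lorentz6 (WRS m b₀ b₂ b₃ u v)
        (fun i => deriv (fun v' => psiRS m b₀ b₂ b₃ u v' i) v) = 0 ∧
      (∀ i : Fin 6, deriv (fun v' => WRS m b₀ b₂ b₃ u v' i) v =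
        ((m ^ 2 + 1) - 1 / b₃ ^ 2) * deriv (fun v' => psiRS m b₀ b₂ b₃ u v' i) v) := by
  intro u v
  refine ⟨?_, ?_, fun i => ?_⟩
  · simp only [lorentz6, WRS_eq, deriv_psiRS_u]
    simp only [psiRS_eq, Matrix.cons_val, Matrix.cons_val_zero, Matrix.cons_val_one]
    ring
  · simp only [lorentz6, WRS_eq, deriv_psiRS_v]
    simp only [psiRS_eq, Matrix.cons_val, Matrix.cons_val_zero, Matrix.cons_val_one]
    ring
  · fin_cases i <;>
      simp only [WRS_eq, Fin.reduceFinMk, Fin.zero_eta, Fin.mk_one, Matrix.cons_val,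
        Matrix.cons_val_zero, Matrix.cons_val_one, deriv_const', deriv_const_mul_field, deriv_psiRS_v,
        mul_zero]

/-- `W` is normal to the surface and its `v`-derivative is tangential:
`⟨W,ψ_u⟩ = 0`, `⟨W,ψ_v⟩ = 0` and `∂W/∂v = ((m²+1) − 1/b₃²)·ψ_v`. -/
theorem WRS_normal_and_v_derivative (m b₀ b₂ b₃ : ℝ) (hm : 1 < m)
    (hb₀ : 0 < b₀) (hb₃ : 0 < b₃)
    (hrel : b₀ ^ 2 + b₂ ^ 2 + b₃ ^ 2 = 1) :
    ∀ u v : ℝ,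
      lorentz6 (WRS m b₀ b₂ b₃ u v)
        (fun i => deriv (fun u' => psiRS m b₀ b₂ b₃ u' v i) u) = 0 ∧
      lorentz6 (WRS m b₀ b₂ b₃ u v)
        (fun i => deriv (fun v' => psiRS m b₀ b₂ b₃ u v' i) v) = 0 ∧
      (∀ i : Fin 6, deriv (fun v' => WRS m b₀ b₂ b₃ u v' i) v =
        ((m ^ 2 + 1) - 1 / b₃ ^ 2) * deriv (fun v' => psiRS m b₀ b₂ b₃ u v' i) v) :=
  WRS_normal_and_v_derivative_general m b₀ b₂ b₃
end
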